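/- Let S = D̃^{-1}Ã as above. If f ∈ ℝ^n satisfies |f_i − f_j| ≤ Δ for every edge (i,j), then ‖S^L f − f‖_2 ≤ √n · L · Δ. -/
import Mathlib


open Matrix

/-- The row-normalized adjacency matrix with self-loops `S = D̃⁻¹Ã`. -/
noncomputable def Smat {n : ℕ} (G : SimpleGraph (Fin n)) [DecidableRel G.Adj] :
    Matrix (Fin n) (Fin n) ℝ :=
  Matrix.of fun i j => ((G.adjMatrix ℝ + 1) i j) / ((G.degree i : ℝ) + 1)

lemma Smat_nonneg {n : ℕ} (G : SimpleGraph (Fin n)) [DecidableRel G.Adj] (i j : Fin n) :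
    0 ≤ Smat G i j := by
  unfold Smat
  simp only [Matrix.of_apply, Matrix.add_apply, SimpleGraph.adjMatrix_apply, Matrix.one_apply]
  apply div_nonneg
  · positivity
  · positivity

lemma Smat_rowsum {n : ℕ} (G : SimpleGraph (Fin n)) [DecidableRel G.Adj] (i : Fin n) :
    ∑ j, Smat G i j = 1 := by
  unfold Smat
  simp only [Matrix.of_apply, Matrix.add_apply, SimpleGraph.adjMatrix_apply, Matrix.one_apply]
  rw [← Finset.sum_div]
  rw [div_eq_one_iff_eq (by positivity)]
  rw [Finset.sum_add_distrib]
  have h1 : ∑ j : Fin n, (if G.Adj i j then (1:ℝ) else 0) = (G.degree i : ℝ) := by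
    rw [Finset.sum_boole]
    congr 1
    rw [SimpleGraph.degree, SimpleGraph.neighborFinset_eq_filter]
  have h2 : ∑ j : Fin n, (if i = j then (1:ℝ) else 0) = 1 := by simp
  rw [h1, h2]

lemma Smat_support {n : ℕ} (G : SimpleGraph (Fin n)) [DecidableRel G.Adj] (i j : Fin n)
    (h : Smat G i j ≠ 0) : i = j ∨ G.Adj i j := by
  by_contra hc
  push_neg at hc
  apply h
  unfold Smat
  simp only [Matrix.of_apply, Matrix.add_apply, SimpleGraph.adjMatrix_apply, Matrix.one_apply]
  rw [if_neg hc.2, if_neg hc.1]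
  simp

/-- Applying S to a vector bounded by M keeps it bounded by M. -/
lemma Smat_contract {n : ℕ} (G : SimpleGraph (Fin n)) [DecidableRel G.Adj]
    (g : Fin n → ℝ) (M : ℝ) (hg : ∀ j, |g j| ≤ M) (i : Fin n) :
    |(Smat G).mulVec g i| ≤ M := by
  have : (Smat G).mulVec g i = ∑ j, Smat G i j * g j := rfl
  rw [this]
  calc |∑ j, Smat G i j * g j| ≤ ∑ j, |Smat G i j * g j| := Finset.abs_sum_le_sum_abs _ _
    _ ≤ ∑ j, Smat G i j * M := by
        apply Finset.sum_le_sum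
        intro j _
        rw [abs_mul, abs_of_nonneg (Smat_nonneg G i j)]
        exact mul_le_mul_of_nonneg_left (hg j) (Smat_nonneg G i j)
    _ = M := by rw [← Finset.sum_mul, Smat_rowsum, one_mul]

/-- One step moves the vector by at most Δ in sup norm. -/
lemma Smat_step {n : ℕ} (G : SimpleGraph (Fin n)) [DecidableRel G.Adj]
    (f : Fin n → ℝ) (Δ : ℝ)
    (hsm : ∀ i j : Fin n, G.Adj i j → |f i - f j| ≤ Δ) (hΔ : 0 ≤ Δ) (i : Fin n) :
    |(Smat G).mulVec f i - f i| ≤ Δ := by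
  have key : (Smat G).mulVec f i - f i = ∑ j, Smat G i j * (f j - f i) := by
    have : (Smat G).mulVec f i = ∑ j, Smat G i j * f j := rfl
    rw [this]
    simp only [mul_sub]
    rw [Finset.sum_sub_distrib, ← Finset.sum_mul, Smat_rowsum, one_mul]
  rw [key]
  calc |∑ j, Smat G i j * (f j - f i)| ≤ ∑ j, |Smat G i j * (f j - f i)| :=
        Finset.abs_sum_le_sum_abs _ _
    _ ≤ ∑ j, Smat G i j * Δ := by
        apply Finset.sum_le_sum
        intro j _
        rw [abs_mul, abs_of_nonneg (Smat_nonneg G i j)]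
        by_cases h : Smat G i j = 0
        · simp [h]
        · rcases Smat_support G i j h with rfl | hadj
          · simp [hΔ, mul_nonneg (Smat_nonneg G i i) hΔ]
          · have := hsm i j hadj
            rw [abs_sub_comm] at this
            exact mul_le_mul_of_nonneg_left this (Smat_nonneg G i j)
    _ = Δ := by rw [← Finset.sum_mul, Smat_rowsum, one_mul]

lemma Smat_pow_bound {n : ℕ} (G : SimpleGraph (Fin n)) [DecidableRel G.Adj]
    (f : Fin n → ℝ) (Δ : ℝ) (hΔ : 0 ≤ Δ)
    (hsm : ∀ i j : Fin n, G.Adj i j → |f i - f j| ≤ Δ) (L : ℕ) :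
    ∀ i, |(Smat G ^ L).mulVec f i - f i| ≤ L * Δ := by
  induction L with
  | zero => simp
  | succ k ih =>
    intro i
    have hpow : (Smat G ^ (k+1)).mulVec f = (Smat G).mulVec ((Smat G ^ k).mulVec f) := by
      rw [pow_succ', ← Matrix.mulVec_mulVec]
    rw [hpow]
    have h1 : ∀ j, |(Smat G).mulVec ((Smat G ^ k).mulVec f) j - (Smat G).mulVec f j| ≤ k * Δ := by
      intro j
      have : (Smat G).mulVec ((Smat G ^ k).mulVec f) j - (Smat G).mulVec f j
          = (Smat G).mulVec (fun l => (Smat G ^ k).mulVec f l - f l) j := by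
        simp [Matrix.mulVec, dotProduct, mul_sub, Finset.sum_sub_distrib]
      rw [this]
      exact Smat_contract G _ _ ih j
    calc |(Smat G).mulVec ((Smat G ^ k).mulVec f) i - f i|
        ≤ |(Smat G).mulVec ((Smat G ^ k).mulVec f) i - (Smat G).mulVec f i|
            + |(Smat G).mulVec f i - f i| := abs_sub_le _ _ _
      _ ≤ k * Δ + Δ := add_le_add (h1 i) (Smat_step G f Δ hsm hΔ i)
      _ = (k + 1 : ℕ) * Δ := by push_cast; ring

/-- If `|f i − f j| ≤ Δ` on every edge, then `‖S^L f − f‖₂ ≤ √n · L · Δ`. -/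
theorem stmt2 {n : ℕ} (G : SimpleGraph (Fin n)) [DecidableRel G.Adj]
    (f : Fin n → ℝ) (Δ : ℝ) (hΔ : 0 < Δ)
    (hsm : ∀ i j : Fin n, G.Adj i j → |f i - f j| ≤ Δ)
    (L : ℕ) (hL : 1 ≤ L) :
    Real.sqrt (∑ i : Fin n, (((Smat G ^ L).mulVec f) i - f i) ^ 2)
      ≤ Real.sqrt n * L * Δ := by
  have hb : ∀ i, ((Smat G ^ L).mulVec f i - f i) ^ 2 ≤ (L * Δ) ^ 2 := by
    intro i
    have := Smat_pow_bound G f Δ hΔ.le hsm L i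
    have h2 := sq_abs ((Smat G ^ L).mulVec f i - f i)
    nlinarith [abs_nonneg ((Smat G ^ L).mulVec f i - f i)]
  calc Real.sqrt (∑ i : Fin n, (((Smat G ^ L).mulVec f) i - f i) ^ 2)
      ≤ Real.sqrt (∑ _i : Fin n, (L * Δ) ^ 2) := by
        apply Real.sqrt_le_sqrt
        exact Finset.sum_le_sum fun i _ => hb i
    _ = Real.sqrt (n * (L * Δ) ^ 2) := by simp [Finset.sum_const, mul_comm]
    _ = Real.sqrt n * (L * Δ) := by
        rw [Real.sqrt_mul (by positivity), Real.sqrt_sq (by positivity)]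
    _ = Real.sqrt n * L * Δ := by ring
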